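/- arXiv:math/0410571 — 4 statements merged into one kernel-verified Lean document; each statement's English description precedes it below -/
import Mathlib

section
/- Let ψ be a continuous frame for H with frame operator S such that sup_{x∈X} ‖ψ_x‖ ≤ C < ∞, let m be an admissible weight with ‖R‖_{A_m} < ∞, fix z ∈ X and set v(x) := m(x,z). Then the normed spaces H¹_v := {f ∈ H : Vf ∈ L¹_v} with norm ‖f‖_{H¹_v} := ∫_X |⟨f,ψ_x⟩| v(x) dμ(x) and K¹_v := {f ∈ H : Wf ∈ L¹_v} with norm ‖f‖_{K¹_v} := ∫_X |⟨f,S⁻¹ψ_x⟩| v(x) dμ(x) are Banach spaces, i.e., complete in these norms. -/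
open MeasureTheory ENNReal
open scoped ENNReal NNReal

noncomputable section

local notation "⟪" x ", " y "⟫" => @inner ℂ _ _ x y


/-- From `t² ≤ a·t` and `0 ≤ t`, `0 ≤ a`, deduce `t ≤ a`. -/
lemma my_sq_cancel {t a : ℝ} (ht : 0 ≤ t) (ha : 0 ≤ a) (h : t ^ 2 ≤ a * t) : t ≤ a := by
  nlinarith

/-- Bound `‖∫ F·G‖` by `B · ∫ ‖F‖·v` for `‖G‖ ≤ B` and `v ≥ 1`. -/
lemma my_integral_bound {X : Type*} [MeasurableSpace X] (μ : Measure X)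
    (F G : X → ℂ) (v : X → ℝ) (hv1 : ∀ x, 1 ≤ v x) (B : ℝ) (hB : 0 ≤ B)
    (hG : ∀ x, ‖G x‖ ≤ B)
    (hfi : Integrable (fun x => ‖F x‖ * v x) μ) :
    ‖∫ x, F x * G x ∂μ‖ ≤ B * ∫ x, ‖F x‖ * v x ∂μ := by
  calc ‖∫ x, F x * G x ∂μ‖ ≤ ∫ x, ‖F x * G x‖ ∂μ := norm_integral_le_integral_norm _
    _ ≤ ∫ x, B * (‖F x‖ * v x) ∂μ := by
        refine integral_mono_of_nonneg (Filter.Eventually.of_forall fun x => norm_nonneg _)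
          (hfi.const_mul B) (Filter.Eventually.of_forall fun x => ?_)
        show ‖F x * G x‖ ≤ B * (‖F x‖ * v x)
        rw [norm_mul]
        have h1 : ‖F x‖ ≤ ‖F x‖ * v x :=
          le_mul_of_one_le_right (norm_nonneg _) (hv1 x)
        calc ‖F x‖ * ‖G x‖ ≤ (‖F x‖ * v x) * B :=
              mul_le_mul h1 (hG x) (norm_nonneg _)
                (mul_nonneg (norm_nonneg _) (le_trans zero_le_one (hv1 x)))
          _ = B * (‖F x‖ * v x) := mul_comm _ _
    _ = B * ∫ x, ‖F x‖ * v x ∂μ := integral_const_mul _ _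

/-- The abstract completeness lemma for `L¹_v`-type coorbit spaces. -/
lemma my_complete_aux {X : Type*} [TopologicalSpace X] [MeasurableSpace X]
    [OpensMeasurableSpace X] (μ : Measure X)
    {H : Type*} [NormedAddCommGroup H] [InnerProductSpace ℂ H] [CompleteSpace H]
    (φ : X → H) (v : X → ℝ)
    (hφcont : ∀ f : H, Continuous fun x => ⟪φ x, f⟫)
    (hvcont : Continuous v) (hv : ∀ x, 0 ≤ v x)
    (D : ℝ) (hD : 0 ≤ D)
    (hDnorm : ∀ f : H, Integrable (fun x => ‖⟪φ x, f⟫‖ * v x) μ →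
      ‖f‖ ≤ D * ∫ x, ‖⟪φ x, f⟫‖ * v x ∂μ)
    (fseq : ℕ → H)
    (hint : ∀ n, Integrable (fun x => ‖⟪φ x, fseq n⟫‖ * v x) μ)
    (hcau : ∀ ε : ℝ, 0 < ε → ∃ N : ℕ, ∀ n ≥ N, ∀ k ≥ N,
      ∫ x, ‖⟪φ x, fseq n - fseq k⟫‖ * v x ∂μ < ε) :
    ∃ f : H, Integrable (fun x => ‖⟪φ x, f⟫‖ * v x) μ ∧
      Filter.Tendsto (fun n => ∫ x, ‖⟪φ x, fseq n - f⟫‖ * v x ∂μ)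
        Filter.atTop (nhds 0) := by
  have hcontg : ∀ g : H, Continuous fun x => ‖⟪φ x, g⟫‖ * v x :=
    fun g => ((hφcont g).norm.mul hvcont)
  have hnn : ∀ (g : H) (x : X), 0 ≤ ‖⟪φ x, g⟫‖ * v x :=
    fun g x => mul_nonneg (norm_nonneg _) (hv x)
  -- integrability of differences
  have hint2 : ∀ g h : H, Integrable (fun x => ‖⟪φ x, g⟫‖ * v x) μ →
      Integrable (fun x => ‖⟪φ x, h⟫‖ * v x) μ →
      Integrable (fun x => ‖⟪φ x, g - h⟫‖ * v x) μ := by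
    intro g h hg hh
    refine (hg.add hh).mono' (hcontg _).aestronglyMeasurable
      (Filter.Eventually.of_forall fun x => ?_)
    rw [Real.norm_of_nonneg (hnn _ x), inner_sub_right]
    calc ‖⟪φ x, g⟫ - ⟪φ x, h⟫‖ * v x
        ≤ (‖⟪φ x, g⟫‖ + ‖⟪φ x, h⟫‖) * v x :=
          mul_le_mul_of_nonneg_right (norm_sub_le _ _) (hv x)
      _ = ‖⟪φ x, g⟫‖ * v x + ‖⟪φ x, h⟫‖ * v x := add_mul _ _ _
  have hInonneg : ∀ g : H, 0 ≤ ∫ x, ‖⟪φ x, g⟫‖ * v x ∂μ :=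
    fun g => integral_nonneg fun x => hnn g x
  -- Cauchy in H
  have hCS : CauchySeq fseq := by
    rw [Metric.cauchySeq_iff]
    intro ε hε
    obtain ⟨N, hN⟩ := hcau (ε / (D + 1)) (div_pos hε (by linarith))
    refine ⟨N, fun n hn k hk => ?_⟩
    rw [dist_eq_norm]
    have h1 : ‖fseq n - fseq k‖ ≤ D * ∫ x, ‖⟪φ x, fseq n - fseq k⟫‖ * v x ∂μ :=
      hDnorm _ (hint2 _ _ (hint n) (hint k))
    have h2 : D * ∫ x, ‖⟪φ x, fseq n - fseq k⟫‖ * v x ∂μ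
        ≤ (D + 1) * ∫ x, ‖⟪φ x, fseq n - fseq k⟫‖ * v x ∂μ :=
      mul_le_mul_of_nonneg_right (by linarith) (hInonneg _)
    have h3 : (D + 1) * ∫ x, ‖⟪φ x, fseq n - fseq k⟫‖ * v x ∂μ
        < (D + 1) * (ε / (D + 1)) :=
      mul_lt_mul_of_pos_left (hN n hn k hk) (by linarith)
    have h4 : (D + 1) * (ε / (D + 1)) = ε := by field_simp
    linarith
  obtain ⟨f, hf⟩ := cauchySeq_tendsto_of_complete hCS
  -- key estimate via Fatou
  have key : ∀ ε : ℝ, 0 < ε → ∃ N : ℕ, ∀ n ≥ N,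
      ∫⁻ x, ENNReal.ofReal (‖⟪φ x, fseq n - f⟫‖ * v x) ∂μ ≤ ENNReal.ofReal ε := by
    intro ε hε
    obtain ⟨N, hN⟩ := hcau ε hε
    refine ⟨N, fun n hn => ?_⟩
    have hpt : ∀ x : X, Filter.Tendsto
        (fun k => ENNReal.ofReal (‖⟪φ x, fseq n - fseq k⟫‖ * v x)) Filter.atTop
        (nhds (ENNReal.ofReal (‖⟪φ x, fseq n - f⟫‖ * v x))) := by
      intro x
      apply ENNReal.tendsto_ofReal
      have hc : Continuous fun y : H => ‖⟪φ x, y⟫‖ * v x :=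
        ((Continuous.inner continuous_const continuous_id).norm).mul continuous_const
      have := (tendsto_const_nhds.sub hf : Filter.Tendsto (fun k => fseq n - fseq k)
        Filter.atTop (nhds (fseq n - f)))
      exact (hc.continuousAt.tendsto.comp this)
    have hmeas : ∀ k : ℕ,
        Measurable fun x => ENNReal.ofReal (‖⟪φ x, fseq n - fseq k⟫‖ * v x) :=
      fun k => (hcontg _).measurable.ennreal_ofReal
    calc ∫⁻ x, ENNReal.ofReal (‖⟪φ x, fseq n - f⟫‖ * v x) ∂μ
        = ∫⁻ x, Filter.liminf
            (fun k => ENNReal.ofReal (‖⟪φ x, fseq n - fseq k⟫‖ * v x))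
            Filter.atTop ∂μ := by
          refine lintegral_congr fun x => ?_
          exact ((hpt x).liminf_eq).symm
      _ ≤ Filter.liminf
            (fun k => ∫⁻ x, ENNReal.ofReal (‖⟪φ x, fseq n - fseq k⟫‖ * v x) ∂μ)
            Filter.atTop := lintegral_liminf_le hmeas
      _ ≤ ENNReal.ofReal ε := by
          refine Filter.liminf_le_of_frequently_le ?_
          refine Filter.Eventually.frequently ?_
          filter_upwards [Filter.eventually_ge_atTop N] with k hk
          rw [← ofReal_integral_eq_lintegral_ofReal
            (hint2 _ _ (hint n) (hint k))
            (Filter.Eventually.of_forall fun x => hnn _ x)]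
          exact ENNReal.ofReal_le_ofReal (hN n hn k hk).le
  -- integrability of the differences with the limit, and of the limit itself
  have hdiffint : ∀ n, (∫⁻ x, ENNReal.ofReal (‖⟪φ x, fseq n - f⟫‖ * v x) ∂μ) < ⊤ →
      Integrable (fun x => ‖⟪φ x, fseq n - f⟫‖ * v x) μ := by
    intro n hfin
    refine ⟨(hcontg _).aestronglyMeasurable, ?_⟩
    rw [hasFiniteIntegral_iff_norm]
    refine lt_of_le_of_lt (le_of_eq ?_) hfin
    refine lintegral_congr fun x => ?_
    rw [Real.norm_of_nonneg (hnn _ x)]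
  obtain ⟨N₀, hN₀⟩ := key 1 one_pos
  have hd₀ : Integrable (fun x => ‖⟪φ x, fseq N₀ - f⟫‖ * v x) μ :=
    hdiffint N₀ (lt_of_le_of_lt (hN₀ N₀ le_rfl) ENNReal.ofReal_lt_top)
  have hfint : Integrable (fun x => ‖⟪φ x, f⟫‖ * v x) μ := by
    refine ((hint N₀).add hd₀).mono' (hcontg _).aestronglyMeasurable
      (Filter.Eventually.of_forall fun x => ?_)
    rw [Real.norm_of_nonneg (hnn _ x)]
    have h1 : ⟪φ x, f⟫ = ⟪φ x, fseq N₀⟫ - ⟪φ x, fseq N₀ - f⟫ := by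
      rw [inner_sub_right]; ring
    calc ‖⟪φ x, f⟫‖ * v x ≤ (‖⟪φ x, fseq N₀⟫‖ + ‖⟪φ x, fseq N₀ - f⟫‖) * v x := by
          refine mul_le_mul_of_nonneg_right ?_ (hv x)
          rw [h1]; exact norm_sub_le _ _
      _ = ‖⟪φ x, fseq N₀⟫‖ * v x + ‖⟪φ x, fseq N₀ - f⟫‖ * v x := add_mul _ _ _
  refine ⟨f, hfint, ?_⟩
  rw [Metric.tendsto_atTop]
  intro ε hε
  obtain ⟨N, hN⟩ := key (ε / 2) (half_pos hε)
  refine ⟨N, fun n hn => ?_⟩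
  have hdn : Integrable (fun x => ‖⟪φ x, fseq n - f⟫‖ * v x) μ :=
    hint2 _ _ (hint n) hfint
  have h1 : ENNReal.ofReal (∫ x, ‖⟪φ x, fseq n - f⟫‖ * v x ∂μ) ≤ ENNReal.ofReal (ε / 2) := by
    rw [ofReal_integral_eq_lintegral_ofReal hdn
      (Filter.Eventually.of_forall fun x => hnn _ x)]
    exact hN n hn
  have h2 : ∫ x, ‖⟪φ x, fseq n - f⟫‖ * v x ∂μ ≤ ε / 2 :=
    (ENNReal.ofReal_le_ofReal_iff (half_pos hε).le).mp h1
  rw [Real.dist_eq, sub_zero, abs_of_nonneg (hInonneg _)]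
  linarith

/-- The norm of the Banach algebra `A_m` of kernels on `X × X`
(`‖K‖_{A_m} = ‖K·m‖_{A₁}`, as a value in `ℝ≥0∞`). -/
def amNorm {X : Type*} [MeasurableSpace X] (μ : Measure X) (m K : X → X → ℝ) : ℝ≥0∞ :=
  max (essSup (fun x => ∫⁻ y, ENNReal.ofReal (|K x y| * m x y) ∂μ) μ)
      (essSup (fun y => ∫⁻ x, ENNReal.ofReal (|K x y| * m x y) ∂μ) μ)

/-- The spaces `H¹_v` and `K¹_v` are complete in their natural norms:
every Cauchy sequence (with respect to the `H¹_v`-, resp. `K¹_v`-norm) of elements of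
`H¹_v` (resp. `K¹_v`) converges in that norm to an element of the space. -/
theorem H1v_K1v_complete
    {X : Type*} [TopologicalSpace X] [T2Space X] [LocallyCompactSpace X]
    [SigmaCompactSpace X] [MeasurableSpace X] [BorelSpace X]
    (μ : Measure X) [μ.Regular] [μ.IsOpenPosMeasure]
    {H : Type*} [NormedAddCommGroup H] [InnerProductSpace ℂ H] [CompleteSpace H]
    [TopologicalSpace.SeparableSpace H]
    (ψ : X → H)
    (hcont : ∀ f : H, Continuous fun x => ⟪ψ x, f⟫)
    (C₁ C₂ : ℝ) (hC₁ : 0 < C₁) (hC₁₂ : C₁ ≤ C₂)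
    (hInt : ∀ f : H, Integrable (fun x => ‖⟪ψ x, f⟫‖ ^ 2) μ)
    (hlow : ∀ f : H, C₁ * ‖f‖ ^ 2 ≤ ∫ x, ‖⟪ψ x, f⟫‖ ^ 2 ∂μ)
    (hup : ∀ f : H, ∫ x, ‖⟪ψ x, f⟫‖ ^ 2 ∂μ ≤ C₂ * ‖f‖ ^ 2)
    (S : H →L[ℂ] H)
    (hS : ∀ f g : H, ⟪g, S f⟫ = ∫ x, ⟪ψ x, f⟫ * ⟪g, ψ x⟫ ∂μ)
    (Sinv : H →L[ℂ] H)
    (hleft : ∀ f, Sinv (S f) = f) (hright : ∀ f, S (Sinv f) = f)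
    -- uniform norm bound on the frame
    (C : ℝ) (hψbd : ∀ x, ‖ψ x‖ ≤ C)
    -- admissible weight `m`
    (m : X → X → ℝ)
    (hm_cont : Continuous fun p : X × X => m p.1 p.2)
    (hm_one : ∀ x y, 1 ≤ m x y)
    (hm_symm : ∀ x y, m x y = m y x)
    (hm_submult : ∀ x y z, m x y ≤ m x z * m z y)
    (hm_diag : ∃ Cm : ℝ, ∀ x, m x x ≤ Cm)
    -- the kernel `R(x,y) = ⟨ψ_y, S⁻¹ψ_x⟩` belongs to `A_m`
    (hR : amNorm μ m (fun x y => ‖⟪Sinv (ψ x), ψ y⟫‖) < ⊤)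
    -- the base point for the weight `v = m(·,z)`
    (z : X) :
    -- completeness of `H¹_v`
    (∀ fseq : ℕ → H,
      (∀ n, Integrable (fun x => ‖⟪ψ x, fseq n⟫‖ * m x z) μ) →
      (∀ ε : ℝ, 0 < ε → ∃ N : ℕ, ∀ n ≥ N, ∀ k ≥ N,
        ∫ x, ‖⟪ψ x, fseq n - fseq k⟫‖ * m x z ∂μ < ε) →
      ∃ f : H, Integrable (fun x => ‖⟪ψ x, f⟫‖ * m x z) μ ∧
        Filter.Tendsto (fun n => ∫ x, ‖⟪ψ x, fseq n - f⟫‖ * m x z ∂μ)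
          Filter.atTop (nhds 0)) ∧
    -- completeness of `K¹_v`
    (∀ fseq : ℕ → H,
      (∀ n, Integrable (fun x => ‖⟪Sinv (ψ x), fseq n⟫‖ * m x z) μ) →
      (∀ ε : ℝ, 0 < ε → ∃ N : ℕ, ∀ n ≥ N, ∀ k ≥ N,
        ∫ x, ‖⟪Sinv (ψ x), fseq n - fseq k⟫‖ * m x z ∂μ < ε) →
      ∃ f : H, Integrable (fun x => ‖⟪Sinv (ψ x), f⟫‖ * m x z) μ ∧
        Filter.Tendsto (fun n => ∫ x, ‖⟪Sinv (ψ x), fseq n - f⟫‖ * m x z ∂μ)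
          Filter.atTop (nhds 0)) := by
  set v : X → ℝ := fun x => m x z with hv_def
  have hvcont : Continuous v := hm_cont.comp (continuous_id.prodMk continuous_const)
  have hv1 : ∀ x, 1 ≤ v x := fun x => hm_one x z
  have hv0 : ∀ x, 0 ≤ v x := fun x => le_trans zero_le_one (hv1 x)
  set C' : ℝ := max C 0 with hC'_def
  have hC'0 : 0 ≤ C' := le_max_right _ _
  have hψ' : ∀ x, ‖ψ x‖ ≤ C' := fun x => le_trans (hψbd x) (le_max_left _ _)
  -- `S` is self-adjoint
  have hSsa : ∀ f g : H, ⟪g, S f⟫ = ⟪S g, f⟫ := by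
    intro f g
    have h2 : ⟪f, S g⟫ = ∫ x, ⟪ψ x, g⟫ * ⟪f, ψ x⟫ ∂μ := hS g f
    calc ⟪g, S f⟫ = ∫ x, ⟪ψ x, f⟫ * ⟪g, ψ x⟫ ∂μ := hS f g
      _ = ∫ x, (starRingEnd ℂ) (⟪ψ x, g⟫ * ⟪f, ψ x⟫) ∂μ := by
          congr 1; funext x
          rw [map_mul, inner_conj_symm, inner_conj_symm, mul_comm]
      _ = (starRingEnd ℂ) (∫ x, ⟪ψ x, g⟫ * ⟪f, ψ x⟫ ∂μ) := integral_conj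
      _ = (starRingEnd ℂ) ⟪f, S g⟫ := by rw [h2]
      _ = ⟪S g, f⟫ := inner_conj_symm _ _
  -- hence so is `Sinv`
  have hSinvsa : ∀ f g : H, ⟪g, Sinv f⟫ = ⟪Sinv g, f⟫ := by
    intro f g
    have h1 : ⟪g, Sinv f⟫ = ⟪S (Sinv g), Sinv f⟫ := by rw [hright]
    have h2 : ⟪Sinv g, S (Sinv f)⟫ = ⟪S (Sinv g), Sinv f⟫ := hSsa (Sinv f) (Sinv g)
    rw [h1, ← h2, hright]
  -- the norm bound for `H¹_v`
  have hD1 : ∀ f : H, Integrable (fun x => ‖⟪ψ x, f⟫‖ * v x) μ →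
      ‖f‖ ≤ (‖Sinv‖ * C') * ∫ x, ‖⟪ψ x, f⟫‖ * v x ∂μ := by
    intro f hfi
    set I := ∫ x, ‖⟪ψ x, f⟫‖ * v x ∂μ with hI_def
    have hI0 : 0 ≤ I :=
      integral_nonneg fun x => mul_nonneg (norm_nonneg _) (hv0 x)
    have hb : ∀ x, ‖⟪S f, ψ x⟫‖ ≤ ‖S f‖ * C' := fun x =>
      le_trans (norm_inner_le_norm _ _)
        (mul_le_mul_of_nonneg_left (hψ' x) (norm_nonneg _))
    have hbound : ‖⟪S f, S f⟫‖ ≤ (‖S f‖ * C') * I := by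
      rw [hS f (S f)]
      exact my_integral_bound μ _ _ v hv1 _
        (mul_nonneg (norm_nonneg _) hC'0) hb hfi
    have hsq : ‖S f‖ ^ 2 ≤ (C' * I) * ‖S f‖ := by
      have hre := inner_self_eq_norm_sq (𝕜 := ℂ) (S f)
      have h2 : ‖S f‖ ^ 2 ≤ ‖⟪S f, S f⟫‖ := by
        rw [← hre]; exact RCLike.re_le_norm _
      calc ‖S f‖ ^ 2 ≤ (‖S f‖ * C') * I := le_trans h2 hbound
        _ = (C' * I) * ‖S f‖ := by ring
    have hSf : ‖S f‖ ≤ C' * I :=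
      my_sq_cancel (norm_nonneg _) (mul_nonneg hC'0 hI0) hsq
    calc ‖f‖ = ‖Sinv (S f)‖ := by rw [hleft]
      _ ≤ ‖Sinv‖ * ‖S f‖ := Sinv.le_opNorm _
      _ ≤ ‖Sinv‖ * (C' * I) := mul_le_mul_of_nonneg_left hSf (norm_nonneg _)
      _ = (‖Sinv‖ * C') * I := by ring
  -- continuity of the dual frame coefficients
  have hφcont2 : ∀ f : H, Continuous fun x => ⟪Sinv (ψ x), f⟫ := by
    intro f
    have h : (fun x => ⟪Sinv (ψ x), f⟫) = fun x => ⟪ψ x, Sinv f⟫ := by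
      funext x; exact (hSinvsa f (ψ x)).symm
    rw [h]; exact hcont (Sinv f)
  -- the norm bound for `K¹_v`
  have hD2 : ∀ f : H, Integrable (fun x => ‖⟪Sinv (ψ x), f⟫‖ * v x) μ →
      ‖f‖ ≤ C' * ∫ x, ‖⟪Sinv (ψ x), f⟫‖ * v x ∂μ := by
    intro f hfi
    set I := ∫ x, ‖⟪Sinv (ψ x), f⟫‖ * v x ∂μ with hI_def
    have hI0 : 0 ≤ I :=
      integral_nonneg fun x => mul_nonneg (norm_nonneg _) (hv0 x)
    have hb : ∀ x, ‖⟪f, ψ x⟫‖ ≤ ‖f‖ * C' := fun x =>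
      le_trans (norm_inner_le_norm _ _)
        (mul_le_mul_of_nonneg_left (hψ' x) (norm_nonneg _))
    have hrepr : ⟪f, f⟫ = ∫ x, ⟪Sinv (ψ x), f⟫ * ⟪f, ψ x⟫ ∂μ := by
      have h1 : ⟪f, S (Sinv f)⟫ = ∫ x, ⟪ψ x, Sinv f⟫ * ⟪f, ψ x⟫ ∂μ := hS (Sinv f) f
      rw [hright] at h1
      rw [h1]; congr 1; funext x; rw [hSinvsa f (ψ x)]
    have hbound : ‖⟪f, f⟫‖ ≤ (‖f‖ * C') * I := by
      rw [hrepr]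
      exact my_integral_bound μ _ _ v hv1 _
        (mul_nonneg (norm_nonneg _) hC'0) hb hfi
    have hsq : ‖f‖ ^ 2 ≤ (C' * I) * ‖f‖ := by
      have hre := inner_self_eq_norm_sq (𝕜 := ℂ) f
      have h2 : ‖f‖ ^ 2 ≤ ‖⟪f, f⟫‖ := by
        rw [← hre]; exact RCLike.re_le_norm _
      calc ‖f‖ ^ 2 ≤ (‖f‖ * C') * I := le_trans h2 hbound
        _ = (C' * I) * ‖f‖ := by ring
    exact my_sq_cancel (norm_nonneg _) (mul_nonneg hC'0 hI0) hsq
  constructor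
  · intro fseq hi hc
    exact my_complete_aux μ ψ v hcont hvcont hv0 (‖Sinv‖ * C')
      (mul_nonneg (norm_nonneg _) hC'0) hD1 fseq hi hc
  · intro fseq hi hc
    exact my_complete_aux μ (fun x => Sinv (ψ x)) v hφcont2 hvcont hv0 C'
      hC'0 hD2 fseq hi hc
end
end

section
/- Let ψ be a continuous frame for H with frame operator S, and let w be a continuous weight on X whose associated weight m := m_w is admissible. Assume both Gramian kernels satisfy ‖G(F,F)‖_{A_m} < ∞ and ‖G(S⁻¹F,S⁻¹F)‖_{A_m} < ∞, where G(F,F)(x,y) = ⟨ψ_y, ψ_x⟩ and G(S⁻¹F,S⁻¹F)(x,y) = ⟨S⁻¹ψ_y, S⁻¹ψ_x⟩. Then for every 1 ≤ p ≤ ∞ and every f ∈ H: ‖Wf‖_{L^p_w} ≤ ‖G(S⁻¹F,S⁻¹F)‖_{A_m} · ‖Vf‖_{L^p_w} and ‖Vf‖_{L^p_w} ≤ ‖G(F,F)‖_{A_m} · ‖Wf‖_{L^p_w}. In particular (p = 1, w = v := m(·,z)), the spaces H¹_v = {f ∈ H : Vf ∈ L¹_v} and K¹_v = {f ∈ H :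 Wf ∈ L¹_v} coincide with equivalent norms. -/
/-! The frame reconstruction formulas express each transform through the other one:
`Wf(x) = ∫ Vf(y) ⟨S⁻¹ψ_x, S⁻¹ψ_y⟩ dμ(y)` and `Vf(x) = ∫ Wf(y) ⟨ψ_x, ψ_y⟩ dμ(y)`.
Since `w(x) ≤ m(x,y) w(y)`, multiplying by `w` dominates `|Wf| w` pointwise by the integral
operator with kernel `|⟨S⁻¹ψ_x, S⁻¹ψ_y⟩| m(x,y)` applied to `|Vf| w` (and symmetrically). The row
and column integrals of that kernel are bounded by its `A_m`-norm, so Schur's test bounds the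
operator on every `L^p`. For `v = m(·,z)` the estimate `v(x) ≤ m(x,y) v(y)` is submultiplicativity
of `m`, and the case `p = 1` gives `H¹_v = K¹_v`. -/

open MeasureTheory ENNReal
open scoped ENNReal NNReal

noncomputable section

local notation "⟪" x ", " y "⟫" => @inner ℂ _ _ x y

/-- The weight on `X × X` associated to a weight `w` on `X`. -/
def mw {X : Type*} (w : X → ℝ) (x y : X) : ℝ :=
  max (w x / w y) (w y / w x)

open Function

section SchurTest

variable {X : Type*} [MeasurableSpace X] {μ : Measure X}

lemma lintegral_mul_rpow_le {K v : X → ℝ≥0∞} (hK : AEMeasurable K μ) (hv : AEMeasurable v μ)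
    {q : ℝ} (hq : 1 ≤ q) :
    (∫⁻ y, K y * v y ∂μ) ^ q ≤ (∫⁻ y, K y ∂μ) ^ (q - 1) * ∫⁻ y, K y * v y ^ q ∂μ := by
  have hq0 : 0 < q := zero_lt_one.trans_le hq
  have hsplit : ∀ y, K y * v y = K y ^ (1 - 1 / q) * (K y * v y ^ q) ^ (1 / q) := fun y => by
    rw [ENNReal.mul_rpow_of_nonneg _ _ (by positivity), ← ENNReal.rpow_mul,
      mul_one_div_cancel hq0.ne', ENNReal.rpow_one, ← mul_assoc,
      ← ENNReal.rpow_add_of_nonneg _ _ (by rw [sub_nonneg, div_le_one hq0]; exact hq)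
        (by positivity), sub_add_cancel, ENNReal.rpow_one]
  have holder := ENNReal.lintegral_mul_norm_pow_le hK (hK.mul (hv.pow_const q))
    (p := 1 - 1 / q) (q := 1 / q) (by rw [sub_nonneg, div_le_one hq0]; exact hq) (by positivity)
    (sub_add_cancel _ _)
  calc (∫⁻ y, K y * v y ∂μ) ^ q
      ≤ ((∫⁻ y, K y ∂μ) ^ (1 - 1 / q) * (∫⁻ y, K y * v y ^ q ∂μ) ^ (1 / q)) ^ q := by
        rw [lintegral_congr hsplit]
        exact ENNReal.rpow_le_rpow holder hq0.le
    _ = (∫⁻ y, K y ∂μ) ^ (q - 1) * ∫⁻ y, K y * v y ^ q ∂μ := by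
        rw [ENNReal.mul_rpow_of_nonneg _ _ hq0.le, ← ENNReal.rpow_mul, ← ENNReal.rpow_mul,
          one_div_mul_cancel hq0.ne', ENNReal.rpow_one, sub_mul, one_div_mul_cancel hq0.ne',
          one_mul]

variable {K : X → X → ℝ≥0∞} {A : ℝ≥0∞}

lemma lintegral_rpow_lintegral_kernel_le [SFinite μ] (hK : Measurable (uncurry K))
    (hrow : ∀ᵐ x ∂μ, ∫⁻ y, K x y ∂μ ≤ A) (hcol : ∀ᵐ y ∂μ, ∫⁻ x, K x y ∂μ ≤ A)
    {v : X → ℝ≥0∞} (hv : Measurable v) {q : ℝ} (hq : 1 ≤ q) :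
    ∫⁻ x, (∫⁻ y, K x y * v y ∂μ) ^ q ∂μ ≤ A ^ q * ∫⁻ y, v y ^ q ∂μ := by
  have hKv : Measurable (uncurry fun x y => K x y * v y ^ q) :=
    hK.mul ((hv.pow_const q).comp measurable_snd)
  calc ∫⁻ x, (∫⁻ y, K x y * v y ∂μ) ^ q ∂μ
      ≤ ∫⁻ x, A ^ (q - 1) * ∫⁻ y, K x y * v y ^ q ∂μ ∂μ := by
        refine lintegral_mono_ae ?_
        filter_upwards [hrow] with x hx
        refine (lintegral_mul_rpow_le (hK.comp measurable_prodMk_left).aemeasurable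
          hv.aemeasurable hq).trans ?_
        exact mul_le_mul_left (ENNReal.rpow_le_rpow hx (by linarith)) _
    _ = A ^ (q - 1) * ∫⁻ y, (∫⁻ x, K x y ∂μ) * v y ^ q ∂μ := by
        rw [lintegral_const_mul _ hKv.lintegral_prod_right, lintegral_lintegral_swap
          hKv.aemeasurable]
        congr 1
        exact lintegral_congr fun y => lintegral_mul_const _ (hK.comp measurable_prodMk_right)
    _ ≤ A ^ (q - 1) * ∫⁻ y, A * v y ^ q ∂μ := by
        gcongr A ^ (q - 1) * ?_
        refine lintegral_mono_ae ?_
        filter_upwards [hcol] with y hy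
        gcongr
    _ = A ^ q * ∫⁻ y, v y ^ q ∂μ := by
        rw [lintegral_const_mul _ (hv.pow_const q), ← mul_assoc]
        congr 1
        conv_rhs => rw [← sub_add_cancel q 1]
        rw [ENNReal.rpow_add_of_nonneg _ _ (by linarith) zero_le_one, ENNReal.rpow_one]

lemma essSup_lintegral_kernel_le (hK : Measurable (uncurry K))
    (hrow : ∀ᵐ x ∂μ, ∫⁻ y, K x y ∂μ ≤ A) (v : X → ℝ≥0∞) :
    essSup (fun x => ∫⁻ y, K x y * v y ∂μ) μ ≤ A * essSup v μ := by
  refine essSup_le_of_ae_le _ ?_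
  filter_upwards [hrow] with x hx
  calc ∫⁻ y, K x y * v y ∂μ ≤ ∫⁻ y, K x y * essSup v μ ∂μ := by
        refine lintegral_mono_ae ?_
        filter_upwards [ae_le_essSup v] with y hy using mul_le_mul_right hy _
    _ = (∫⁻ y, K x y ∂μ) * essSup v μ :=
        lintegral_mul_const _ (hK.comp measurable_prodMk_left)
    _ ≤ A * essSup v μ := mul_le_mul_left hx _

theorem eLpNorm_le_mul_eLpNorm_of_enorm_le_lintegral_kernel [SFinite μ]
    {E F : Type*} [NormedAddCommGroup E] [NormedAddCommGroup F]
    (hK : Measurable (uncurry K))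
    (hrow : ∀ᵐ x ∂μ, ∫⁻ y, K x y ∂μ ≤ A) (hcol : ∀ᵐ y ∂μ, ∫⁻ x, K x y ∂μ ≤ A)
    {g : X → E} {h : X → F} (hh : Measurable fun y => ‖h y‖ₑ)
    (hgh : ∀ x, ‖g x‖ₑ ≤ ∫⁻ y, K x y * ‖h y‖ₑ ∂μ) {p : ℝ≥0∞} (hp : 1 ≤ p) :
    eLpNorm g p μ ≤ A * eLpNorm h p μ := by
  rcases eq_or_ne p ⊤ with rfl | hp_top
  · simp only [eLpNorm_exponent_top, eLpNormEssSup]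
    exact (essSup_mono_ae (.of_forall hgh)).trans (essSup_lintegral_kernel_le hK hrow _)
  have hp0 : p ≠ 0 := (zero_lt_one.trans_le hp).ne'
  have hq : 1 ≤ p.toReal := by
    simpa using ENNReal.toReal_mono hp_top hp
  have hq0 : 0 < p.toReal := zero_lt_one.trans_le hq
  rw [eLpNorm_eq_lintegral_rpow_enorm_toReal hp0 hp_top,
    eLpNorm_eq_lintegral_rpow_enorm_toReal hp0 hp_top]
  calc (∫⁻ x, ‖g x‖ₑ ^ p.toReal ∂μ) ^ (1 / p.toReal)
      ≤ (∫⁻ x, (∫⁻ y, K x y * ‖h y‖ₑ ∂μ) ^ p.toReal ∂μ) ^ (1 / p.toReal) := by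
        gcongr with x
        exact hgh x
    _ ≤ (A ^ p.toReal * ∫⁻ y, ‖h y‖ₑ ^ p.toReal ∂μ) ^ (1 / p.toReal) := by
        gcongr
        exact lintegral_rpow_lintegral_kernel_le hK hrow hcol hh hq
    _ = A * (∫⁻ y, ‖h y‖ₑ ^ p.toReal ∂μ) ^ (1 / p.toReal) := by
        rw [ENNReal.mul_rpow_of_nonneg _ _ (by positivity), ← ENNReal.rpow_mul,
          mul_one_div_cancel hq0.ne', ENNReal.rpow_one]

end SchurTest

section AssociatedWeight

variable {X : Type*} {w : X → ℝ}

lemma mw_nonneg {x y : X} (hx : 0 ≤ w x) (hy : 0 ≤ w y) : 0 ≤ mw w x y :=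
  (div_nonneg hx hy).trans (le_max_left _ _)

lemma le_mw_mul (x : X) {y : X} (hy : 0 < w y) : w x ≤ mw w x y * w y :=
  (div_mul_cancel₀ (w x) hy.ne').symm.le.trans
    (mul_le_mul_of_nonneg_right (le_max_left _ _) hy.le)

lemma mw_le_mul {x y z : X} (hx : 0 ≤ w x) (hy : 0 < w y) (hz : 0 ≤ w z) :
    mw w x z ≤ mw w x y * mw w y z := by
  have hxy := mw_nonneg hx hy.le
  refine max_le ?_ ?_
  · calc w x / w z = w x / w y * (w y / w z) := (div_mul_div_cancel₀ hy.ne').symm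
      _ ≤ mw w x y * mw w y z :=
        mul_le_mul (le_max_left _ _) (le_max_left _ _) (div_nonneg hy.le hz) hxy
  · calc w z / w x = w y / w x * (w z / w y) := by rw [mul_comm, div_mul_div_cancel₀ hy.ne']
      _ ≤ mw w x y * mw w y z :=
        mul_le_mul (le_max_right _ _) (le_max_right _ _) (div_nonneg hz hy.le) hxy

lemma measurable_mw [MeasurableSpace X] (hw : Measurable w) : Measurable (uncurry (mw w)) :=
  ((hw.comp measurable_fst).div (hw.comp measurable_snd)).max
    ((hw.comp measurable_snd).div (hw.comp measurable_fst))

end AssociatedWeight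

section KernelBound

variable {X : Type*} [MeasurableSpace X] {μ : Measure X} {m : X → X → ℝ}

lemma ae_lintegral_le_amNorm_row (K : X → X → ℝ) :
    ∀ᵐ x ∂μ, ∫⁻ y, ENNReal.ofReal (|K x y| * m x y) ∂μ ≤ amNorm μ m K :=
  (ae_le_essSup _).mono fun _ hx => hx.trans (le_max_left _ _)

lemma ae_lintegral_le_amNorm_col (K : X → X → ℝ) :
    ∀ᵐ y ∂μ, ∫⁻ x, ENNReal.ofReal (|K x y| * m x y) ∂μ ≤ amNorm μ m K :=
  (ae_le_essSup _).mono fun _ hy => hy.trans (le_max_right _ _)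

variable {𝕜 : Type*} [RCLike 𝕜] {G : X → X → 𝕜} {F₁ F₂ : X → 𝕜} {v : X → ℝ}

lemma enorm_mul_le_lintegral_of_eq_integral {x : X} (hrepr : F₁ x = ∫ y, F₂ y * G x y ∂μ)
    (hv : ∀ y, 0 ≤ v y) (hvm : ∀ y, v x ≤ m x y * v y) :
    ‖‖F₁ x‖ * v x‖ₑ ≤ ∫⁻ y, ENNReal.ofReal (|‖G x y‖| * m x y) * ‖‖F₂ y‖ * v y‖ₑ ∂μ := by
  calc ‖‖F₁ x‖ * v x‖ₑ = ‖F₁ x‖ₑ * ‖v x‖ₑ := by rw [enorm_mul, enorm_norm]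
    _ ≤ (∫⁻ y, ‖F₂ y * G x y‖ₑ ∂μ) * ‖v x‖ₑ := by
        rw [hrepr]
        gcongr
        exact enorm_integral_le_lintegral_enorm _
    _ = ∫⁻ y, ‖F₂ y * G x y‖ₑ * ‖v x‖ₑ ∂μ := (lintegral_mul_const' _ _ enorm_ne_top).symm
    _ ≤ ∫⁻ y, ENNReal.ofReal (|‖G x y‖| * m x y) * ‖‖F₂ y‖ * v y‖ₑ ∂μ := by
        refine lintegral_mono fun y => ?_
        rw [← ofReal_norm, ← ofReal_norm, ← ENNReal.ofReal_mul (norm_nonneg _),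
          Real.enorm_eq_ofReal (mul_nonneg (norm_nonneg _) (hv y)), ← ENNReal.ofReal_mul'
          (mul_nonneg (norm_nonneg _) (hv y)), norm_mul, Real.norm_of_nonneg (hv x), abs_norm]
        refine ENNReal.ofReal_le_ofReal ?_
        calc ‖F₂ y‖ * ‖G x y‖ * v x ≤ ‖F₂ y‖ * ‖G x y‖ * (m x y * v y) := by gcongr; exact hvm y
          _ = ‖G x y‖ * m x y * (‖F₂ y‖ * v y) := by ring

theorem eLpNorm_mul_le_amNorm_mul_of_eq_integral [SFinite μ] (hG : Measurable (uncurry G))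
    (hm : Measurable (uncurry m)) (hF₂ : Measurable F₂)
    (hrepr : ∀ x, F₁ x = ∫ y, F₂ y * G x y ∂μ) (hv : Measurable v) (hv0 : ∀ x, 0 ≤ v x)
    (hvm : ∀ x y, v x ≤ m x y * v y) {p : ℝ≥0∞} (hp : 1 ≤ p) :
    eLpNorm (fun x => ‖F₁ x‖ * v x) p μ ≤
      amNorm μ m (fun x y => ‖G x y‖) * eLpNorm (fun y => ‖F₂ y‖ * v y) p μ :=
  eLpNorm_le_mul_eLpNorm_of_enorm_le_lintegral_kernel
    (K := fun x y => ENNReal.ofReal (|‖G x y‖| * m x y))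
    (ENNReal.measurable_ofReal.comp (hG.norm.abs.mul hm))
    (ae_lintegral_le_amNorm_row _) (ae_lintegral_le_amNorm_col _) (hF₂.norm.mul hv).enorm
    (fun x => enorm_mul_le_lintegral_of_eq_integral (hrepr x) hv0 (hvm x)) hp

end KernelBound

section WeakMeasurability

variable {𝕜 E : Type*} [RCLike 𝕜] [NormedAddCommGroup E] [InnerProductSpace 𝕜 E]
  [TopologicalSpace.SeparableSpace E]

theorem Orthonormal.countable {ι : Type*} {v : ι → E} (hv : Orthonormal 𝕜 v) : Countable ι := by
  refine Pairwise.countable_of_isOpen_disjoint (s := fun i => Metric.ball (v i) (1 / 2))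
    (fun i j hij => Metric.ball_disjoint_ball ?_) (fun _ => Metric.isOpen_ball)
    (fun i => ⟨v i, Metric.mem_ball_self (by norm_num)⟩)
  have hdist : dist (v i) (v j) ^ 2 = 2 := by
    rw [dist_eq_norm, @norm_sub_sq 𝕜, hv.1 i, hv.1 j, hv.2 hij]
    norm_num
  nlinarith [dist_nonneg (x := v i) (y := v j)]

theorem measurable_of_forall_measurable_inner [CompleteSpace E] [MeasurableSpace E] [BorelSpace E]
    {X : Type*} [MeasurableSpace X] {ψ : X → E} (h : ∀ f, Measurable fun x => inner 𝕜 f (ψ x)) :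
    Measurable ψ := by
  obtain ⟨s, b, -⟩ := exists_hilbertBasis 𝕜 E
  have := b.orthonormal.countable
  refine measurable_of_tendsto_metrizable' Filter.atTop
    (f := fun (t : Finset s) x => ∑ i ∈ t, inner 𝕜 (b i) (ψ x) • b i)
    (fun t => Finset.measurable_sum _ fun i _ => (h (b i)).smul_const _)
    (tendsto_pi_nhds.2 fun x => ?_)
  have hsum := b.hasSum_repr (ψ x)
  simp only [b.repr_apply_apply] at hsum
  exact hsum

end WeakMeasurability

section Frame

variable {X : Type*} [MeasurableSpace X] {μ : Measure X}
  {H : Type*} [NormedAddCommGroup H] [InnerProductSpace ℂ H] {ψ : X → H} {S Sinv : H →L[ℂ] H}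

lemma isSymmetric_of_inner_eq_integral (hS : ∀ f g, ⟪g, S f⟫ = ∫ x, ⟪ψ x, f⟫ * ⟪g, ψ x⟫ ∂μ) :
    (S : H →ₗ[ℂ] H).IsSymmetric := fun g f => by
  rw [ContinuousLinearMap.coe_coe, ← inner_conj_symm, hS, ← integral_conj, hS]
  congr 1 with x
  rw [map_mul, inner_conj_symm, inner_conj_symm, mul_comm]

lemma isSymmetric_of_rightInverse (hS : (S : H →ₗ[ℂ] H).IsSymmetric)
    (hright : ∀ f, S (Sinv f) = f) : (Sinv : H →ₗ[ℂ] H).IsSymmetric := fun g f => by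
  have h := hS (Sinv g) (Sinv f)
  simp only [ContinuousLinearMap.coe_coe, hright] at h ⊢
  exact h.symm

lemma inner_eq_integral_frame_mul_dual (hS : ∀ f g, ⟪g, S f⟫ = ∫ x, ⟪ψ x, f⟫ * ⟪g, ψ x⟫ ∂μ)
    (hleft : ∀ f, Sinv (S f) = f) (hright : ∀ f, S (Sinv f) = f) (g f : H) :
    ⟪g, f⟫ = ∫ y, ⟪ψ y, f⟫ * ⟪g, Sinv (ψ y)⟫ ∂μ := by
  have hSinv := isSymmetric_of_rightInverse (isSymmetric_of_inner_eq_integral hS) hright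
  rw [← hleft f, ← ContinuousLinearMap.coe_coe, ← hSinv, ContinuousLinearMap.coe_coe, hS,
    hleft]
  simp only [← ContinuousLinearMap.coe_coe Sinv, hSinv _ (ψ _)]

lemma inner_eq_integral_dual_mul_frame (hS : ∀ f g, ⟪g, S f⟫ = ∫ x, ⟪ψ x, f⟫ * ⟪g, ψ x⟫ ∂μ)
    (hright : ∀ f, S (Sinv f) = f) (g f : H) :
    ⟪g, f⟫ = ∫ y, ⟪Sinv (ψ y), f⟫ * ⟪g, ψ y⟫ ∂μ := by
  have hSinv := isSymmetric_of_rightInverse (isSymmetric_of_inner_eq_integral hS) hright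
  conv_lhs => rw [← hright f, hS]
  simp only [← ContinuousLinearMap.coe_coe Sinv, hSinv _ f]

end Frame

lemma MeasureTheory.Integrable.of_eLpNorm_one_le_mul {X E F : Type*} [MeasurableSpace X]
    {μ : Measure X} [NormedAddCommGroup E] [NormedAddCommGroup F] {g : X → E} {h : X → F}
    (hh : Integrable h μ) (hg : AEStronglyMeasurable g μ) {C : ℝ≥0∞} (hC : C ≠ ⊤)
    (hgh : eLpNorm g 1 μ ≤ C * eLpNorm h 1 μ) : Integrable g μ :=
  memLp_one_iff_integrable.1
    ⟨hg, hgh.trans_lt (ENNReal.mul_lt_top hC.lt_top (memLp_one_iff_integrable.2 hh).2)⟩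

theorem localization_implies_equal_coorbits_general
    {X : Type*} [TopologicalSpace X]
    [SigmaCompactSpace X] [MeasurableSpace X] [BorelSpace X]
    (μ : Measure X) [μ.Regular]
    {H : Type*} [NormedAddCommGroup H] [InnerProductSpace ℂ H] [CompleteSpace H]
    [TopologicalSpace.SeparableSpace H]
    (ψ : X → H)
    (hcont : ∀ f : H, Continuous fun x => ⟪ψ x, f⟫)
    (S : H →L[ℂ] H)
    (hS : ∀ f g : H, ⟪g, S f⟫ = ∫ x, ⟪ψ x, f⟫ * ⟪g, ψ x⟫ ∂μ)
    (Sinv : H →L[ℂ] H)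
    (hleft : ∀ f, Sinv (S f) = f) (hright : ∀ f, S (Sinv f) = f)
    -- a continuous weight with admissible associated weight `m = m_w`
    (w : X → ℝ) (hw : Continuous w) (hwpos : ∀ x, 0 < w x)
    -- `F` and `S⁻¹F` are intrinsically `A_m`-localized
    (hGFF : amNorm μ (mw w) (fun x y => ‖⟪ψ x, ψ y⟫‖) < ⊤)
    (hGSS : amNorm μ (mw w) (fun x y => ‖⟪Sinv (ψ x), Sinv (ψ y)⟫‖) < ⊤) :
    (∀ p : ℝ≥0∞, 1 ≤ p → ∀ f : H,
      eLpNorm (fun x => ‖⟪Sinv (ψ x), f⟫‖ * w x) p μ ≤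
        amNorm μ (mw w) (fun x y => ‖⟪Sinv (ψ x), Sinv (ψ y)⟫‖) *
          eLpNorm (fun x => ‖⟪ψ x, f⟫‖ * w x) p μ ∧
      eLpNorm (fun x => ‖⟪ψ x, f⟫‖ * w x) p μ ≤
        amNorm μ (mw w) (fun x y => ‖⟪ψ x, ψ y⟫‖) *
          eLpNorm (fun x => ‖⟪Sinv (ψ x), f⟫‖ * w x) p μ) ∧
    -- in particular, with `p = 1` and `v := m(·,z)`:  `H¹_v = K¹_v`
    (∀ z : X, ∀ f : H,
      Integrable (fun x => ‖⟪ψ x, f⟫‖ * mw w x z) μ ↔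
        Integrable (fun x => ‖⟪Sinv (ψ x), f⟫‖ * mw w x z) μ) := by
  borelize H
  have hSinv := isSymmetric_of_rightInverse (isSymmetric_of_inner_eq_integral hS) hright
  have hcontW (f : H) : Continuous fun x => ⟪Sinv (ψ x), f⟫ := by
    simpa only [← ContinuousLinearMap.coe_coe Sinv, hSinv _ f] using hcont (Sinv f)
  have hψ : Measurable ψ := measurable_of_forall_measurable_inner (𝕜 := ℂ) fun f => by
    simpa only [Function.comp_def, inner_conj_symm] using
      (Complex.continuous_conj.comp (hcont f)).measurable
  have hφ : Measurable fun x => Sinv (ψ x) := Sinv.continuous.measurable.comp hψ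
  have hGF := (hψ.comp measurable_fst).inner (𝕜 := ℂ) (hψ.comp measurable_snd)
  have hGS := (hφ.comp measurable_fst).inner (𝕜 := ℂ) (hφ.comp measurable_snd)
  have hW (f : H) (x : X) := inner_eq_integral_frame_mul_dual hS hleft hright (Sinv (ψ x)) f
  have hV (f : H) (x : X) := inner_eq_integral_dual_mul_frame hS hright (ψ x) f
  have hmw := measurable_mw hw.measurable
  have hw0 (x : X) := (hwpos x).le
  refine ⟨fun p hp f => ⟨?_, ?_⟩, fun z f => ?_⟩
  · exact eLpNorm_mul_le_amNorm_mul_of_eq_integral hGS hmw (hcont f).measurable (hW f)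
      hw.measurable hw0 (fun x y => le_mw_mul x (hwpos y)) hp
  · exact eLpNorm_mul_le_amNorm_mul_of_eq_integral hGF hmw (hcontW f).measurable (hV f)
      hw.measurable hw0 (fun x y => le_mw_mul x (hwpos y)) hp
  have hv : Measurable fun x => mw w x z := hmw.comp (measurable_id.prodMk measurable_const)
  have hv0 (x : X) : 0 ≤ mw w x z := mw_nonneg (hw0 x) (hw0 z)
  have hvm (x y : X) : mw w x z ≤ mw w x y * mw w y z := mw_le_mul (hw0 x) (hwpos y) (hw0 z)
  exact ⟨fun hVf => hVf.of_eLpNorm_one_le_mul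
      ((hcontW f).measurable.norm.mul hv).aestronglyMeasurable hGSS.ne
      (eLpNorm_mul_le_amNorm_mul_of_eq_integral hGS hmw (hcont f).measurable (hW f)
        hv hv0 hvm le_rfl),
    fun hWf => hWf.of_eLpNorm_one_le_mul
      ((hcont f).measurable.norm.mul hv).aestronglyMeasurable hGFF.ne
      (eLpNorm_mul_le_amNorm_mul_of_eq_integral hGF hmw (hcontW f).measurable (hV f)
        hv hv0 hvm le_rfl)⟩

/-- If both `G(F,F)` and `G(S⁻¹F,S⁻¹F)` lie in `A_m`, then the transforms
`V` and `W` have equivalent weighted `L^p_w`-norms, with constants given by the respective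
kernel norms; in particular `H¹_v = K¹_v` with equivalent norms. -/
theorem localization_implies_equal_coorbits
    {X : Type*} [TopologicalSpace X] [T2Space X] [LocallyCompactSpace X]
    [SigmaCompactSpace X] [MeasurableSpace X] [BorelSpace X]
    (μ : Measure X) [μ.Regular] [μ.IsOpenPosMeasure]
    {H : Type*} [NormedAddCommGroup H] [InnerProductSpace ℂ H] [CompleteSpace H]
    [TopologicalSpace.SeparableSpace H]
    (ψ : X → H)
    (hcont : ∀ f : H, Continuous fun x => ⟪ψ x, f⟫)
    (C₁ C₂ : ℝ) (hC₁ : 0 < C₁) (hC₁₂ : C₁ ≤ C₂)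
    (hInt : ∀ f : H, Integrable (fun x => ‖⟪ψ x, f⟫‖ ^ 2) μ)
    (hlow : ∀ f : H, C₁ * ‖f‖ ^ 2 ≤ ∫ x, ‖⟪ψ x, f⟫‖ ^ 2 ∂μ)
    (hup : ∀ f : H, ∫ x, ‖⟪ψ x, f⟫‖ ^ 2 ∂μ ≤ C₂ * ‖f‖ ^ 2)
    (S : H →L[ℂ] H)
    (hS : ∀ f g : H, ⟪g, S f⟫ = ∫ x, ⟪ψ x, f⟫ * ⟪g, ψ x⟫ ∂μ)
    (Sinv : H →L[ℂ] H)
    (hleft : ∀ f, Sinv (S f) = f) (hright : ∀ f, S (Sinv f) = f)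
    -- a continuous weight with admissible associated weight `m = m_w`
    (w : X → ℝ) (hw : Continuous w) (hwpos : ∀ x, 0 < w x)
    -- `F` and `S⁻¹F` are intrinsically `A_m`-localized
    (hGFF : amNorm μ (mw w) (fun x y => ‖⟪ψ x, ψ y⟫‖) < ⊤)
    (hGSS : amNorm μ (mw w) (fun x y => ‖⟪Sinv (ψ x), Sinv (ψ y)⟫‖) < ⊤) :
    (∀ p : ℝ≥0∞, 1 ≤ p → ∀ f : H,
      eLpNorm (fun x => ‖⟪Sinv (ψ x), f⟫‖ * w x) p μ ≤
        amNorm μ (mw w) (fun x y => ‖⟪Sinv (ψ x), Sinv (ψ y)⟫‖) *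
          eLpNorm (fun x => ‖⟪ψ x, f⟫‖ * w x) p μ ∧
      eLpNorm (fun x => ‖⟪ψ x, f⟫‖ * w x) p μ ≤
        amNorm μ (mw w) (fun x y => ‖⟪ψ x, ψ y⟫‖) *
          eLpNorm (fun x => ‖⟪Sinv (ψ x), f⟫‖ * w x) p μ) ∧
    -- in particular, with `p = 1` and `v := m(·,z)`:  `H¹_v = K¹_v`
    (∀ z : X, ∀ f : H,
      Integrable (fun x => ‖⟪ψ x, f⟫‖ * mw w x z) μ ↔
        Integrable (fun x => ‖⟪Sinv (ψ x), f⟫‖ * mw w x z) μ) :=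
  localization_implies_equal_coorbits_general μ ψ hcont S hS Sinv hleft hright w hw hwpos hGFF hGSS
end
end

section
/- Let U = (U_i)_{i∈I} be a moderate admissible covering of X and w a continuous weight on X whose associated weight m_w is admissible and satisfies the m_w-cover condition for U. Put a_i := μ(U_i) and w̃(i) := sup_{x∈U_i} w(x). Then for each 1 ≤ p < ∞ there exist constants 0 < c ≤ C < ∞ such that for every sequence (λ_i)_{i∈I} of nonnegative reals: c · ‖(λ_i a_i^{1/p} w̃(i))_i‖_{ℓ^p(I)} ≤ ‖Σ_{i∈I} λ_i χ_{U_i}‖_{L^p_w} ≤ C · ‖(λ_i a_i^{1/p} w̃(i))_i‖_{ℓ^p(I)}, and likewise c · ‖(λ_i a_i^{1/p−1} w̃(i))_i‖_{ℓ^p(I)} ≤ ‖Σ_{i∈I} λ_i μ(U_i)^{-1} χ_{U_i}‖_{L^p_w} ≤ C · ‖(λ_i a_i^{1/p−1} w̃(i))_i‖_{ℓ^p(I)}. -/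
/-!
Every point of `X` lies in at most `N` of the sets `Uᵢ`, so pointwise
`∑ᵢ (λᵢ χ_{Uᵢ})^p ≤ (∑ᵢ λᵢ χ_{Uᵢ})^p ≤ N^(p-1) ∑ᵢ (λᵢ χ_{Uᵢ})^p`. Integrating against `w^p`
compares `‖∑ᵢ λᵢ χ_{Uᵢ}‖_{L^p_w}^p` with `∑ᵢ λᵢ^p ∫_{Uᵢ} w^p`, and the `m_w`-cover condition gives
`w̃(i) / C_{m,U} ≤ w ≤ w̃(i)` on `Uᵢ`, hence `∫_{Uᵢ} w^p ≍ aᵢ w̃(i)^p`. The second equivalence is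
the first one for the coefficients `λᵢ aᵢ⁻¹`.
-/

open MeasureTheory ENNReal
open scoped ENNReal NNReal

noncomputable section

/-- A moderate admissible covering `U = (U_i)_{i∈I}` of `X`. -/
structure ModCover (X : Type*) [TopologicalSpace X] [MeasurableSpace X]
    (μ : MeasureTheory.Measure X) (I : Type*) where
  U : I → Set X
  measU : ∀ i, MeasurableSet (U i)
  relCompact : ∀ i, IsCompact (closure (U i))
  interiorNonempty : ∀ i, (interior (U i)).Nonempty
  covers : (⋃ i, U i) = Set.univ
  N : ℕ
  overlapFin : ∀ j : I, {i : I | (U i ∩ U j).Nonempty}.Finite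
  overlapBound : ∀ j : I, {i : I | (U i ∩ U j).Nonempty}.ncard ≤ N
  measLower : ℝ≥0∞
  measLowerPos : 0 < measLower
  lower : ∀ i, measLower ≤ μ (U i)
  finiteMeas : ∀ i, μ (U i) < ⊤
  Ctilde : ℝ≥0∞
  CtildeFin : Ctilde < ⊤
  moderate : ∀ i j, (U i ∩ U j).Nonempty → μ (U i) ≤ Ctilde * μ (U j)
namespace ENNReal

variable {ι : Type*} {p : ℝ}

theorem rpow_eq_mul_rpow_sub_one (hp : 1 ≤ p) (a : ℝ≥0∞) : a ^ p = a * a ^ (p - 1) := by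
  conv_lhs => rw [show p = 1 + (p - 1) by ring]
  rw [rpow_add_of_nonneg _ _ zero_le_one (by linarith), rpow_one]

theorem tsum_rpow_le_rpow_tsum (hp : 1 ≤ p) (a : ι → ℝ≥0∞) :
    ∑' i, a i ^ p ≤ (∑' i, a i) ^ p :=
  calc ∑' i, a i ^ p = ∑' i, a i * a i ^ (p - 1) := by
        simp_rw [← rpow_eq_mul_rpow_sub_one hp]
    _ ≤ ∑' i, a i * (∑' j, a j) ^ (p - 1) := ENNReal.tsum_le_tsum fun i =>
        mul_le_mul_right (rpow_le_rpow (ENNReal.le_tsum i) (by linarith)) _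
    _ = (∑' i, a i) ^ p := by rw [ENNReal.tsum_mul_right, rpow_eq_mul_rpow_sub_one hp]

theorem rpow_tsum_le_mul_tsum_rpow {a : ι → ℝ≥0∞} {N : ℕ}
    (ha : (Function.support a).encard ≤ N) (hp : 1 ≤ p) :
    (∑' i, a i) ^ p ≤ (N : ℝ≥0∞) ^ (p - 1) * ∑' i, a i ^ p := by
  obtain ⟨hfin, hcard⟩ := Set.encard_le_coe_iff_finite_ncard_le.1 ha
  have hsupp : Function.support (fun i => a i ^ p) ⊆ hfin.toFinset := fun i hi => by
    simpa using fun h : a i = 0 => hi (by simp [h, zero_rpow_of_pos (by linarith : 0 < p)])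
  rw [tsum_eq_sum' (s := hfin.toFinset) (by simp), tsum_eq_sum' hsupp]
  calc (∑ i ∈ hfin.toFinset, a i) ^ p
      ≤ (hfin.toFinset.card : ℝ≥0∞) ^ (p - 1) * ∑ i ∈ hfin.toFinset, a i ^ p :=
        rpow_sum_le_const_mul_sum_rpow _ _ hp
    _ ≤ (N : ℝ≥0∞) ^ (p - 1) * ∑ i ∈ hfin.toFinset, a i ^ p := by
        gcongr
        rw [← Set.ncard_eq_toFinset_card _ hfin]
        exact_mod_cast hcard

theorem indicator_rpow {α : Type*} (hp : 0 < p) (s : Set α) (f : α → ℝ≥0∞) (x : α) :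
    s.indicator f x ^ p = s.indicator (fun y => f y ^ p) x :=
  congrFun (Set.indicator_comp_of_zero (g := (· ^ p)) (zero_rpow_of_pos hp)).symm x

theorem rpow_mul_rpow_one_div_mul (hp : 0 < p) (a m b : ℝ≥0∞) :
    (a * m ^ (1 / p) * b) ^ p = a ^ p * (m * b ^ p) := by
  rw [mul_rpow_of_nonneg _ _ hp.le, mul_rpow_of_nonneg _ _ hp.le, ← rpow_mul,
    one_div_mul_cancel hp.ne', rpow_one, mul_assoc]

end ENNReal

section LocallyFiniteSum

variable {X I : Type*} [MeasurableSpace X] {μ : Measure X} [Countable I] {U : I → Set X}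
  {V : X → ℝ≥0∞} {p : ℝ}

theorem lintegral_tsum_indicator_mul (hU : ∀ i, MeasurableSet (U i)) (hV : AEMeasurable V μ)
    (d : I → ℝ≥0∞) :
    ∫⁻ x, (∑' i, (U i).indicator (fun _ => d i) x) * V x ∂μ =
      ∑' i, d i * ∫⁻ x in U i, V x ∂μ := by
  simp_rw [← ENNReal.tsum_mul_right]
  rw [lintegral_tsum (f := fun i x => (U i).indicator (fun _ => d i) x * V x)
    fun i => (aemeasurable_const.indicator (hU i)).mul hV]
  congr with i
  simp_rw [← Set.indicator_mul_left]
  rw [lintegral_indicator (hU i), lintegral_const_mul'' _ hV.restrict]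

theorem tsum_rpow_mul_setLIntegral_le (hU : ∀ i, MeasurableSet (U i)) (hV : AEMeasurable V μ)
    (hp : 1 ≤ p) (c : I → ℝ≥0∞) :
    ∑' i, c i ^ p * ∫⁻ x in U i, V x ∂μ ≤
      ∫⁻ x, (∑' i, (U i).indicator (fun _ => c i) x) ^ p * V x ∂μ := by
  rw [← lintegral_tsum_indicator_mul hU hV]
  gcongr with x
  simp_rw [← ENNReal.indicator_rpow (zero_lt_one.trans_le hp)]
  exact ENNReal.tsum_rpow_le_rpow_tsum hp _

theorem lintegral_rpow_tsum_indicator_mul_le (hU : ∀ i, MeasurableSet (U i))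
    (hV : AEMeasurable V μ) {N : ℕ} (hN : ∀ x, {i | x ∈ U i}.encard ≤ N) (hp : 1 ≤ p)
    (c : I → ℝ≥0∞) :
    ∫⁻ x, (∑' i, (U i).indicator (fun _ => c i) x) ^ p * V x ∂μ ≤
      (N : ℝ≥0∞) ^ (p - 1) * ∑' i, c i ^ p * ∫⁻ x in U i, V x ∂μ := by
  rw [← lintegral_tsum_indicator_mul hU hV,
    ← lintegral_const_mul' _ _ (rpow_ne_top_of_nonneg (by linarith) (natCast_ne_top N))]
  refine lintegral_mono fun x => ?_
  rw [← mul_assoc]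
  gcongr ?_ * _
  simp_rw [← ENNReal.indicator_rpow (zero_lt_one.trans_le hp)]
  refine ENNReal.rpow_tsum_le_mul_tsum_rpow ((Set.encard_le_encard fun i hi => ?_).trans (hN x)) hp
  by_contra hx
  exact hi (Set.indicator_of_notMem hx _)

end LocallyFiniteSum

section Weight

variable {X : Type*} {w : X → ℝ} {S : Set X} {K : ℝ}

theorem le_mul_of_mw_le {x y : X} (hx : 0 < w x) (h : mw w x y ≤ K) : w y ≤ K * w x :=
  (div_le_iff₀ hx).1 ((le_max_right _ _).trans h)

theorem csSup_image_le_of_mw_le (hwpos : ∀ x, 0 < w x) (hS : ∀ x ∈ S, ∀ y ∈ S, mw w x y ≤ K)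
    {x : X} (hx : x ∈ S) : sSup (w '' S) ≤ K * w x :=
  csSup_le ⟨w x, x, hx, rfl⟩ fun _ ⟨y, hy, hwy⟩ => hwy ▸ le_mul_of_mw_le (hwpos x) (hS x hx y hy)

theorem le_csSup_image_of_mw_le (hwpos : ∀ x, 0 < w x) (hS : ∀ x ∈ S, ∀ y ∈ S, mw w x y ≤ K)
    {x : X} (hx : x ∈ S) : w x ≤ sSup (w '' S) :=
  le_csSup ⟨K * w x, fun _ ⟨y, hy, hwy⟩ => hwy ▸ le_mul_of_mw_le (hwpos x) (hS x hx y hy)⟩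
    ⟨x, hx, rfl⟩

variable [MeasurableSpace X] (μ : Measure X) {p : ℝ}

theorem setLIntegral_ofReal_rpow_le_of_mw_le (hwpos : ∀ x, 0 < w x)
    (hS : ∀ x ∈ S, ∀ y ∈ S, mw w x y ≤ K) (hSm : MeasurableSet S) (hp : 0 ≤ p) :
    ∫⁻ x in S, ENNReal.ofReal (w x) ^ p ∂μ ≤ μ S * ENNReal.ofReal (sSup (w '' S)) ^ p :=
  calc ∫⁻ x in S, ENNReal.ofReal (w x) ^ p ∂μ
      ≤ ∫⁻ _ in S, ENNReal.ofReal (sSup (w '' S)) ^ p ∂μ := setLIntegral_mono' hSm fun x hx =>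
        rpow_le_rpow (ofReal_le_ofReal (le_csSup_image_of_mw_le hwpos hS hx)) hp
    _ = μ S * ENNReal.ofReal (sSup (w '' S)) ^ p := by rw [setLIntegral_const, mul_comm]

theorem measure_mul_ofReal_csSup_rpow_le_of_mw_le (hwpos : ∀ x, 0 < w x)
    (hS : ∀ x ∈ S, ∀ y ∈ S, mw w x y ≤ K) (hSm : MeasurableSet S) (hp : 0 ≤ p) (hK : 0 ≤ K) :
    μ S * ENNReal.ofReal (sSup (w '' S)) ^ p ≤
      ENNReal.ofReal K ^ p * ∫⁻ x in S, ENNReal.ofReal (w x) ^ p ∂μ :=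
  calc μ S * ENNReal.ofReal (sSup (w '' S)) ^ p
      = ∫⁻ _ in S, ENNReal.ofReal (sSup (w '' S)) ^ p ∂μ := by rw [setLIntegral_const, mul_comm]
    _ ≤ ∫⁻ x in S, ENNReal.ofReal K ^ p * ENNReal.ofReal (w x) ^ p ∂μ :=
        setLIntegral_mono' hSm fun x hx => by
          rw [← mul_rpow_of_nonneg _ _ hp, ← ofReal_mul hK]
          exact rpow_le_rpow (ofReal_le_ofReal (csSup_image_le_of_mw_le hwpos hS hx)) hp
    _ = ENNReal.ofReal K ^ p * ∫⁻ x in S, ENNReal.ofReal (w x) ^ p ∂μ :=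
        lintegral_const_mul' _ _ (rpow_ne_top_of_nonneg hp ofReal_ne_top)

end Weight

namespace ModCover

variable {X I : Type*} [TopologicalSpace X] [MeasurableSpace X] {μ : Measure X}
  (𝒰 : ModCover X μ I) {w : X → ℝ} {p : ℝ}

theorem encard_setOf_mem_le (x : X) : {i | x ∈ 𝒰.U i}.encard ≤ 𝒰.N := by
  obtain ⟨j, hj⟩ := Set.mem_iUnion.1 (𝒰.covers ▸ Set.mem_univ x)
  have hsub : {i | x ∈ 𝒰.U i} ⊆ {i | (𝒰.U i ∩ 𝒰.U j).Nonempty} := fun i hi => ⟨x, hi, hj⟩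
  exact (Set.encard_le_encard hsub).trans
    (Set.encard_le_coe_iff_finite_ncard_le.2 ⟨𝒰.overlapFin j, 𝒰.overlapBound j⟩)

theorem enorm_tsum_mul_indicator_mul (hwpos : ∀ x, 0 < w x) {lam : I → ℝ} (hlam : ∀ i, 0 ≤ lam i)
    (x : X) :
    ‖(∑' i, lam i * (𝒰.U i).indicator (fun _ => (1 : ℝ)) x) * w x‖ₑ =
      (∑' i, (𝒰.U i).indicator (fun _ => ENNReal.ofReal (lam i)) x) * ENNReal.ofReal (w x) := by
  have hterm : ∀ i, lam i * (𝒰.U i).indicator (fun _ => (1 : ℝ)) x =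
      (𝒰.U i).indicator (fun _ => lam i) x := fun i => by
    by_cases hx : x ∈ 𝒰.U i <;> simp [hx]
  have hfin : {i | x ∈ 𝒰.U i}.Finite := Set.finite_of_encard_le_coe (𝒰.encard_setOf_mem_le x)
  have hnonneg : ∀ i, 0 ≤ (𝒰.U i).indicator (fun _ => lam i) x :=
    fun i => Set.indicator_nonneg (fun _ _ => hlam i) x
  have hsum : Summable fun i => (𝒰.U i).indicator (fun _ => lam i) x :=
    summable_of_hasFiniteSupport <| hfin.subset fun i hi => by
      by_contra hx
      exact hi (Set.indicator_of_notMem hx _)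
  simp_rw [hterm]
  rw [Real.enorm_eq_ofReal (mul_nonneg (tsum_nonneg hnonneg) (hwpos x).le),
    ofReal_mul (tsum_nonneg hnonneg), ofReal_tsum_of_nonneg hnonneg hsum]
  congr with i
  exact (congrFun (Set.indicator_comp_of_zero (g := ENNReal.ofReal) ofReal_zero) x).symm

theorem eLpNorm_tsum_mul_indicator_mul_eq (hwpos : ∀ x, 0 < w x) (hp : 0 < p) {lam : I → ℝ}
    (hlam : ∀ i, 0 ≤ lam i) :
    eLpNorm (fun x => (∑' i, lam i * (𝒰.U i).indicator (fun _ => (1 : ℝ)) x) * w x)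
        (ENNReal.ofReal p) μ =
      (∫⁻ x, (∑' i, (𝒰.U i).indicator (fun _ => ENNReal.ofReal (lam i)) x) ^ p *
        ENNReal.ofReal (w x) ^ p ∂μ) ^ (1 / p) := by
  rw [eLpNorm_eq_lintegral_rpow_enorm_toReal (by simpa) ofReal_ne_top, toReal_ofReal hp.le]
  simp_rw [𝒰.enorm_tsum_mul_indicator_mul hwpos hlam, mul_rpow_of_nonneg _ _ hp.le]

theorem ofReal_mul_toReal_inv_mul_rpow (i : I) {l : ℝ} (hl : 0 ≤ l) (q : ℝ) :
    ENNReal.ofReal (l * (μ (𝒰.U i)).toReal⁻¹) * μ (𝒰.U i) ^ q =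
      ENNReal.ofReal l * μ (𝒰.U i) ^ (q - 1) := by
  have hμ0 : μ (𝒰.U i) ≠ 0 := (𝒰.measLowerPos.trans_le (𝒰.lower i)).ne'
  have hμt : μ (𝒰.U i) ≠ ∞ := (𝒰.finiteMeas i).ne
  rw [ofReal_mul hl, ofReal_inv_of_pos (toReal_pos hμ0 hμt), ofReal_toReal hμt, sub_eq_add_neg,
    rpow_add _ _ hμ0 hμt, rpow_neg_one]
  ring

variable [BorelSpace X] [Countable I]

theorem le_eLpNorm_tsum_mul_indicator_mul (hw : Continuous w) (hwpos : ∀ x, 0 < w x) {K : ℝ}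
    (hcover : ∀ i, ∀ x ∈ 𝒰.U i, ∀ y ∈ 𝒰.U i, mw w x y ≤ K) (hp : 1 ≤ p) {lam : I → ℝ}
    (hlam : ∀ i, 0 ≤ lam i) :
    (ENNReal.ofReal (max K 1))⁻¹ * (∑' i, (ENNReal.ofReal (lam i) * μ (𝒰.U i) ^ (1 / p) *
        ENNReal.ofReal (sSup (w '' 𝒰.U i))) ^ p) ^ (1 / p) ≤
      eLpNorm (fun x => (∑' i, lam i * (𝒰.U i).indicator (fun _ => (1 : ℝ)) x) * w x)
        (ENNReal.ofReal p) μ := by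
  have hp0 : 0 < p := by linarith
  have hK : (0 : ℝ) < max K 1 := lt_max_of_lt_right one_pos
  have hcover' : ∀ i, ∀ x ∈ 𝒰.U i, ∀ y ∈ 𝒰.U i, mw w x y ≤ max K 1 :=
    fun i x hx y hy => (hcover i x hx y hy).trans (le_max_left _ _)
  have hWm : AEMeasurable (fun x => ENNReal.ofReal (w x) ^ p) μ :=
    (hw.measurable.ennreal_ofReal.pow_const p).aemeasurable
  set L := ∫⁻ x, (∑' i, (𝒰.U i).indicator (fun _ => ENNReal.ofReal (lam i)) x) ^ p *
    ENNReal.ofReal (w x) ^ p ∂μ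
  have hA : ∑' i, (ENNReal.ofReal (lam i) * μ (𝒰.U i) ^ (1 / p) *
      ENNReal.ofReal (sSup (w '' 𝒰.U i))) ^ p ≤ ENNReal.ofReal (max K 1) ^ p * L :=
    calc _ ≤ ∑' i, ENNReal.ofReal (lam i) ^ p * (ENNReal.ofReal (max K 1) ^ p *
          ∫⁻ x in 𝒰.U i, ENNReal.ofReal (w x) ^ p ∂μ) := by
          gcongr with i
          rw [rpow_mul_rpow_one_div_mul hp0]
          gcongr _ * ?_
          exact measure_mul_ofReal_csSup_rpow_le_of_mw_le μ hwpos (hcover' i) (𝒰.measU i) hp0.le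
            hK.le
      _ = ENNReal.ofReal (max K 1) ^ p * ∑' i, ENNReal.ofReal (lam i) ^ p *
          ∫⁻ x in 𝒰.U i, ENNReal.ofReal (w x) ^ p ∂μ := by
          simp_rw [mul_left_comm _ (ENNReal.ofReal (max K 1) ^ p), ENNReal.tsum_mul_left]
      _ ≤ ENNReal.ofReal (max K 1) ^ p * L := by
          gcongr
          exact tsum_rpow_mul_setLIntegral_le 𝒰.measU hWm hp _
  rw [𝒰.eLpNorm_tsum_mul_indicator_mul_eq hwpos hp0 hlam,
    ENNReal.inv_mul_le_iff (by simp) ofReal_ne_top]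
  calc _ ≤ (ENNReal.ofReal (max K 1) ^ p * L) ^ (1 / p) := rpow_le_rpow hA (by positivity)
    _ = ENNReal.ofReal (max K 1) * L ^ (1 / p) := by
      rw [mul_rpow_of_nonneg _ _ (by positivity), ← rpow_mul, mul_one_div_cancel hp0.ne',
        rpow_one]

theorem eLpNorm_tsum_mul_indicator_mul_le (hw : Continuous w) (hwpos : ∀ x, 0 < w x) {K : ℝ}
    (hcover : ∀ i, ∀ x ∈ 𝒰.U i, ∀ y ∈ 𝒰.U i, mw w x y ≤ K) (hp : 1 ≤ p) {lam : I → ℝ}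
    (hlam : ∀ i, 0 ≤ lam i) :
    eLpNorm (fun x => (∑' i, lam i * (𝒰.U i).indicator (fun _ => (1 : ℝ)) x) * w x)
        (ENNReal.ofReal p) μ ≤
      ((𝒰.N : ℝ≥0∞) ^ (p - 1)) ^ (1 / p) * (∑' i, (ENNReal.ofReal (lam i) *
        μ (𝒰.U i) ^ (1 / p) * ENNReal.ofReal (sSup (w '' 𝒰.U i))) ^ p) ^ (1 / p) := by
  have hp0 : 0 < p := by linarith
  have hWm : AEMeasurable (fun x => ENNReal.ofReal (w x) ^ p) μ :=
    (hw.measurable.ennreal_ofReal.pow_const p).aemeasurable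
  rw [𝒰.eLpNorm_tsum_mul_indicator_mul_eq hwpos hp0 hlam, ← mul_rpow_of_nonneg _ _ (by positivity)]
  gcongr
  calc _ ≤ (𝒰.N : ℝ≥0∞) ^ (p - 1) * ∑' i, ENNReal.ofReal (lam i) ^ p *
        ∫⁻ x in 𝒰.U i, ENNReal.ofReal (w x) ^ p ∂μ :=
        lintegral_rpow_tsum_indicator_mul_le 𝒰.measU hWm 𝒰.encard_setOf_mem_le hp _
    _ ≤ _ := by
        gcongr with i
        rw [rpow_mul_rpow_one_div_mul hp0]
        gcongr
        exact setLIntegral_ofReal_rpow_le_of_mw_le μ hwpos (hcover i) (𝒰.measU i) hp0.le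

end ModCover

theorem sequence_spaces_of_Lpw_general
    {X : Type*} [TopologicalSpace X] [MeasurableSpace X] [BorelSpace X]
    (μ : MeasureTheory.Measure X)
    {I : Type*} [Countable I]
    (𝒰 : ModCover X μ I)
    (w : X → ℝ) (hw : Continuous w) (hwpos : ∀ x, 0 < w x)
    -- the `m_w`-cover condition
    (CmU : ℝ) (hcover : ∀ i, ∀ x ∈ 𝒰.U i, ∀ y ∈ 𝒰.U i, mw w x y ≤ CmU) :
    ∀ p : ℝ, 1 ≤ p →
      ∃ c C : ℝ≥0∞, 0 < c ∧ C < ⊤ ∧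
        ∀ lam : I → ℝ, (∀ i, 0 ≤ lam i) →
          (c * (∑' i, (ENNReal.ofReal (lam i) * μ (𝒰.U i) ^ (1 / p) *
                  ENNReal.ofReal (sSup (w '' 𝒰.U i))) ^ p) ^ (1 / p) ≤
              MeasureTheory.eLpNorm
                (fun x => (∑' i, lam i * (𝒰.U i).indicator (fun _ => (1 : ℝ)) x) * w x)
                (ENNReal.ofReal p) μ ∧
            MeasureTheory.eLpNorm
                (fun x => (∑' i, lam i * (𝒰.U i).indicator (fun _ => (1 : ℝ)) x) * w x)
                (ENNReal.ofReal p) μ ≤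
              C * (∑' i, (ENNReal.ofReal (lam i) * μ (𝒰.U i) ^ (1 / p) *
                  ENNReal.ofReal (sSup (w '' 𝒰.U i))) ^ p) ^ (1 / p)) ∧
          (c * (∑' i, (ENNReal.ofReal (lam i) * μ (𝒰.U i) ^ (1 / p - 1) *
                  ENNReal.ofReal (sSup (w '' 𝒰.U i))) ^ p) ^ (1 / p) ≤
              MeasureTheory.eLpNorm
                (fun x => (∑' i, lam i * (μ (𝒰.U i)).toReal⁻¹ *
                    (𝒰.U i).indicator (fun _ => (1 : ℝ)) x) * w x)
                (ENNReal.ofReal p) μ ∧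
            MeasureTheory.eLpNorm
                (fun x => (∑' i, lam i * (μ (𝒰.U i)).toReal⁻¹ *
                    (𝒰.U i).indicator (fun _ => (1 : ℝ)) x) * w x)
                (ENNReal.ofReal p) μ ≤
              C * (∑' i, (ENNReal.ofReal (lam i) * μ (𝒰.U i) ^ (1 / p - 1) *
                  ENNReal.ofReal (sSup (w '' 𝒰.U i))) ^ p) ^ (1 / p)) := by
  intro p hp
  refine ⟨(ENNReal.ofReal (max CmU 1))⁻¹, ((𝒰.N : ℝ≥0∞) ^ (p - 1)) ^ (1 / p),
    ENNReal.inv_pos.2 ofReal_ne_top,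
    rpow_lt_top_of_nonneg (by positivity) (rpow_ne_top_of_nonneg (by linarith) (natCast_ne_top _)),
    fun lam hlam => ⟨⟨𝒰.le_eLpNorm_tsum_mul_indicator_mul hw hwpos hcover hp hlam,
      𝒰.eLpNorm_tsum_mul_indicator_mul_le hw hwpos hcover hp hlam⟩, ?_⟩⟩
  have hlam' : ∀ i, 0 ≤ lam i * (μ (𝒰.U i)).toReal⁻¹ :=
    fun i => mul_nonneg (hlam i) (by positivity)
  have hrescale : ∀ i, ENNReal.ofReal (lam i) * μ (𝒰.U i) ^ (1 / p - 1) =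
      ENNReal.ofReal (lam i * (μ (𝒰.U i)).toReal⁻¹) * μ (𝒰.U i) ^ (1 / p) :=
    fun i => (𝒰.ofReal_mul_toReal_inv_mul_rpow i (hlam i) _).symm
  simp only [hrescale]
  exact ⟨𝒰.le_eLpNorm_tsum_mul_indicator_mul hw hwpos hcover hp hlam',
    𝒰.eLpNorm_tsum_mul_indicator_mul_le hw hwpos hcover hp hlam'⟩

/-- For `Y = L^p_w`, `1 ≤ p < ∞`, the sequence spaces `Y^♭` and `Y^♮`
associated to a moderate admissible covering are weighted `ℓ^p` spaces:
`‖∑ᵢ λᵢ χ_{Uᵢ}‖_{L^p_w} ≍ ‖(λᵢ aᵢ^{1/p} w̃(i))ᵢ‖_{ℓ^p}` and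
`‖∑ᵢ λᵢ μ(Uᵢ)⁻¹ χ_{Uᵢ}‖_{L^p_w} ≍ ‖(λᵢ aᵢ^{1/p−1} w̃(i))ᵢ‖_{ℓ^p}`. -/
theorem sequence_spaces_of_Lpw
    {X : Type*} [TopologicalSpace X] [T2Space X] [LocallyCompactSpace X]
    [SigmaCompactSpace X] [MeasurableSpace X] [BorelSpace X]
    (μ : MeasureTheory.Measure X) [μ.Regular] [μ.IsOpenPosMeasure]
    {I : Type*} [Countable I]
    (𝒰 : ModCover X μ I)
    (w : X → ℝ) (hw : Continuous w) (hwpos : ∀ x, 0 < w x)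
    -- the `m_w`-cover condition
    (CmU : ℝ) (hcover : ∀ i, ∀ x ∈ 𝒰.U i, ∀ y ∈ 𝒰.U i, mw w x y ≤ CmU) :
    ∀ p : ℝ, 1 ≤ p →
      ∃ c C : ℝ≥0∞, 0 < c ∧ C < ⊤ ∧
        ∀ lam : I → ℝ, (∀ i, 0 ≤ lam i) →
          (c * (∑' i, (ENNReal.ofReal (lam i) * μ (𝒰.U i) ^ (1 / p) *
                  ENNReal.ofReal (sSup (w '' 𝒰.U i))) ^ p) ^ (1 / p) ≤
              MeasureTheory.eLpNorm
                (fun x => (∑' i, lam i * (𝒰.U i).indicator (fun _ => (1 : ℝ)) x) * w x)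
                (ENNReal.ofReal p) μ ∧
            MeasureTheory.eLpNorm
                (fun x => (∑' i, lam i * (𝒰.U i).indicator (fun _ => (1 : ℝ)) x) * w x)
                (ENNReal.ofReal p) μ ≤
              C * (∑' i, (ENNReal.ofReal (lam i) * μ (𝒰.U i) ^ (1 / p) *
                  ENNReal.ofReal (sSup (w '' 𝒰.U i))) ^ p) ^ (1 / p)) ∧
          (c * (∑' i, (ENNReal.ofReal (lam i) * μ (𝒰.U i) ^ (1 / p - 1) *
                  ENNReal.ofReal (sSup (w '' 𝒰.U i))) ^ p) ^ (1 / p) ≤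
              MeasureTheory.eLpNorm
                (fun x => (∑' i, lam i * (μ (𝒰.U i)).toReal⁻¹ *
                    (𝒰.U i).indicator (fun _ => (1 : ℝ)) x) * w x)
                (ENNReal.ofReal p) μ ∧
            MeasureTheory.eLpNorm
                (fun x => (∑' i, lam i * (μ (𝒰.U i)).toReal⁻¹ *
                    (𝒰.U i).indicator (fun _ => (1 : ℝ)) x) * w x)
                (ENNReal.ofReal p) μ ≤
              C * (∑' i, (ENNReal.ofReal (lam i) * μ (𝒰.U i) ^ (1 / p - 1) *
                  ENNReal.ofReal (sSup (w '' 𝒰.U i))) ^ p) ^ (1 / p)) :=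
  sequence_spaces_of_Lpw_general μ 𝒰 w hw hwpos CmU hcover
end
end

section
/- Let U = (U_i)_{i∈I} be a moderate admissible covering of X, w a continuous weight whose associated weight m := m_w is admissible and satisfies the m-cover condition for U, fix z ∈ X and set v := m(·,z), ṽ(i) := sup_{x∈U_i} v(x) and r(i) := ṽ(i)·μ(U_i). Then for each 1 ≤ p ≤ ∞ there exists a constant C such that for every sequence (λ_i)_{i∈I} of nonnegative reals and every k ∈ I: λ_k ≤ C · r(k) · ‖Σ_{i∈I} λ_i μ(U_i)^{-1} χ_{U_i}‖_{L^p_w}; that is, the sequence space (L^p_w)^♮(U) embeds continuously into ℓ^∞_{1/r}(I). -/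
/-!
On `U_k` the sum `Σ_i λ_i μ(U_i)⁻¹ χ_{U_i}` is at least its `k`-th term `λ_k μ(U_k)⁻¹`, and
`w(z) / w(x) ≤ m(x,z) ≤ ṽ(k)` bounds `w` from below there by `w(z) / ṽ(k)`. Hence the weighted sum
dominates the constant `λ_k w(z) / (ṽ(k) μ(U_k))` on `U_k`, whose `L^p`-norm over `U_k` is that
constant times `μ(U_k)^{1/p} ≥ min(D, 1)`. Continuity of `w` and compactness of `closure U_k` make
`ṽ(k)` a genuine (finite) supremum.
-/

open MeasureTheory ENNReal
open scoped ENNReal NNReal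

noncomputable section

theorem ENNReal.min_one_le_rpow (x : ℝ≥0∞) {t : ℝ} (ht0 : 0 ≤ t) (ht1 : t ≤ 1) :
    min x 1 ≤ x ^ t := by
  rcases le_total x 1 with hx | hx
  · calc min x 1 ≤ x ^ (1 : ℝ) := by simp
      _ ≤ x ^ t := ENNReal.rpow_le_rpow_of_exponent_ge hx ht1
  · exact (min_le_right _ _).trans (by simpa using ENNReal.rpow_le_rpow hx ht0)

theorem ENNReal.one_div_toReal_le_one {p : ℝ≥0∞} (hp : 1 ≤ p) : 1 / p.toReal ≤ 1 := by
  rcases eq_or_ne p ⊤ with rfl | hp_top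
  · simp
  · exact div_le_one_of_le₀ (by simpa using ENNReal.toReal_mono hp_top hp) toReal_nonneg

theorem MeasureTheory.ofReal_mul_rpow_le_eLpNorm {α E : Type*} [MeasurableSpace α]
    [NormedAddCommGroup E] {μ : Measure α} {p : ℝ≥0∞} (hp : p ≠ 0) {S : Set α}
    (hS : MeasurableSet S) (hμS : μ S ≠ 0) {F : α → E} {c : ℝ} (hc : 0 ≤ c)
    (hcF : ∀ x ∈ S, c ≤ ‖F x‖) :
    ENNReal.ofReal c * μ S ^ (1 / p.toReal) ≤ eLpNorm F p μ := by
  rw [← Real.enorm_of_nonneg hc, ← eLpNorm_indicator_const' hS hμS hp]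
  refine eLpNorm_mono fun x => ?_
  by_cases hx : x ∈ S
  · simpa [hx, abs_of_nonneg hc] using hcF x hx
  · simp [hx]

section Weight

variable {X : Type*} {w : X → ℝ}

theorem div_le_mw (x y : X) : w y / w x ≤ mw w x y := le_max_right _ _

theorem continuous_mw_left [TopologicalSpace X] (hw : Continuous w) (hwpos : ∀ x, 0 < w x)
    (z : X) : Continuous fun x => mw w x z := by
  have hw0 : ∀ x, w x ≠ 0 := fun x => (hwpos x).ne'
  unfold mw
  fun_prop (disch := exact hw0 _)

theorem bddAbove_mw_image [TopologicalSpace X] (hw : Continuous w) (hwpos : ∀ x, 0 < w x)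
    {S : Set X} (hS : IsCompact (closure S)) (z : X) :
    BddAbove ((fun x => mw w x z) '' S) :=
  (hS.bddAbove_image (continuous_mw_left hw hwpos z).continuousOn).mono
    (Set.image_mono subset_closure)

end Weight

namespace ModCover

variable {X I : Type*} [TopologicalSpace X] [MeasurableSpace X] {μ : Measure X}
  (𝒰 : ModCover X μ I)

/-- The function `Σ_i λ_i μ(U_i)⁻¹ χ_{U_i}` whose norm defines `Y^♮(U)`. -/
def naturalSum (lam : I → ℝ) (x : X) : ℝ :=
  ∑' i, lam i * (μ (𝒰.U i)).toReal⁻¹ * (𝒰.U i).indicator (fun _ => (1 : ℝ)) x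

theorem measure_ne_zero (k : I) : μ (𝒰.U k) ≠ 0 :=
  (𝒰.measLowerPos.trans_le (𝒰.lower k)).ne'

theorem measure_ne_top (k : I) : μ (𝒰.U k) ≠ ⊤ := (𝒰.finiteMeas k).ne

theorem finite_setOf_mem (x : X) : {i | x ∈ 𝒰.U i}.Finite := by
  obtain ⟨j, hj⟩ := Set.mem_iUnion.1 (𝒰.covers.symm ▸ Set.mem_univ x)
  exact (𝒰.overlapFin j).subset fun i hi => ⟨x, hi, hj⟩

theorem summable_mul_indicator (a : I → ℝ) (x : X) :
    Summable fun i => a i * (𝒰.U i).indicator (fun _ => (1 : ℝ)) x := by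
  refine summable_of_hasFiniteSupport ((𝒰.finite_setOf_mem x).subset fun i hi => ?_)
  by_contra hx
  exact hi (by simp only [Set.indicator_of_notMem (show x ∉ 𝒰.U i from hx), mul_zero])

theorem le_naturalSum {lam : I → ℝ} (hlam : ∀ i, 0 ≤ lam i) {k : I} {x : X} (hx : x ∈ 𝒰.U k) :
    lam k * (μ (𝒰.U k)).toReal⁻¹ ≤ 𝒰.naturalSum lam x := by
  have hle := (𝒰.summable_mul_indicator (fun i => lam i * (μ (𝒰.U i)).toReal⁻¹) x).le_tsum k
    fun i _ => by
      have := hlam i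
      have : 0 ≤ (𝒰.U i).indicator (fun _ => (1 : ℝ)) x := Set.indicator_nonneg (by simp) x
      positivity
  simpa [naturalSum, Set.indicator_of_mem hx] using hle

theorem min_measLower_one_le_rpow {p : ℝ≥0∞} (hp : 1 ≤ p) (k : I) :
    min 𝒰.measLower 1 ≤ μ (𝒰.U k) ^ (1 / p.toReal) :=
  (min_le_min_right 1 (𝒰.lower k)).trans
    (ENNReal.min_one_le_rpow _ (by positivity) (ENNReal.one_div_toReal_le_one hp))

theorem ofReal_mul_le_eLpNorm {w : X → ℝ} (hwpos : ∀ x, 0 < w x) {z : X} {k : I} {v : ℝ}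
    (hv : 0 < v) (hvw : ∀ x ∈ 𝒰.U k, w z ≤ v * w x) {p : ℝ≥0∞} (hp : 1 ≤ p)
    {lam : I → ℝ} (hlam : ∀ i, 0 ≤ lam i) :
    ENNReal.ofReal (lam k) * ENNReal.ofReal (w z) * min 𝒰.measLower 1 ≤
      ENNReal.ofReal v * μ (𝒰.U k) * eLpNorm (fun x => 𝒰.naturalSum lam x * w x) p μ := by
  set M := μ (𝒰.U k)
  have hM : 0 < M.toReal := toReal_pos (𝒰.measure_ne_zero k) (𝒰.measure_ne_top k)
  set c := lam k * w z / (v * M.toReal) with hc_def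
  have hc0 : 0 ≤ c := by rw [hc_def]; have := hlam k; have := hwpos z; positivity
  have hc : v * M.toReal * c = lam k * w z := by rw [hc_def]; field_simp
  have hcF : ∀ x ∈ 𝒰.U k, c ≤ ‖𝒰.naturalSum lam x * w x‖ := fun x hx =>
    calc c ≤ lam k * (v * w x) / (v * M.toReal) := by
          rw [hc_def]; gcongr; exacts [hlam k, hvw x hx]
      _ = lam k * M.toReal⁻¹ * w x := by field_simp
      _ ≤ 𝒰.naturalSum lam x * w x := by
          gcongr; exacts [(hwpos x).le, 𝒰.le_naturalSum hlam hx]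
      _ ≤ ‖𝒰.naturalSum lam x * w x‖ := Real.le_norm_self _
  have hnorm := ofReal_mul_rpow_le_eLpNorm (zero_lt_one.trans_le hp).ne' (𝒰.measU k)
    (𝒰.measure_ne_zero k) hc0 hcF
  calc ENNReal.ofReal (lam k) * ENNReal.ofReal (w z) * min 𝒰.measLower 1
      = ENNReal.ofReal v * M * (ENNReal.ofReal c * min 𝒰.measLower 1) := by
        rw [← ENNReal.ofReal_mul (hlam k), ← hc, ENNReal.ofReal_mul (by positivity),
          ENNReal.ofReal_mul hv.le, ofReal_toReal (𝒰.measure_ne_top k), mul_assoc]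
    _ ≤ ENNReal.ofReal v * M * eLpNorm (fun x => 𝒰.naturalSum lam x * w x) p μ := by
        gcongr
        exact (mul_le_mul_right (𝒰.min_measLower_one_le_rpow hp k) _).trans hnorm

end ModCover

theorem Ynatural_embeds_linfty_general
    {X : Type*} [TopologicalSpace X] [MeasurableSpace X]
    (μ : MeasureTheory.Measure X)
    {I : Type*}
    (𝒰 : ModCover X μ I)
    (w : X → ℝ) (hw : Continuous w) (hwpos : ∀ x, 0 < w x)
    (z : X) :
    ∀ p : ℝ≥0∞, 1 ≤ p →
      ∃ C : ℝ≥0∞, C < ⊤ ∧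
        ∀ lam : I → ℝ, (∀ i, 0 ≤ lam i) → ∀ k : I,
          ENNReal.ofReal (lam k) ≤
            C * (ENNReal.ofReal (sSup ((fun x => mw w x z) '' 𝒰.U k)) * μ (𝒰.U k)) *
              MeasureTheory.eLpNorm
                (fun x => (∑' i, lam i * (μ (𝒰.U i)).toReal⁻¹ *
                    (𝒰.U i).indicator (fun _ => (1 : ℝ)) x) * w x) p μ := by
  intro p hp
  set D := ENNReal.ofReal (w z) * min 𝒰.measLower 1
  have hD0 : D ≠ 0 := mul_ne_zero (by simpa using hwpos z)
    (lt_min 𝒰.measLowerPos zero_lt_one).ne'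
  have hDtop : D ≠ ⊤ := mul_ne_top ofReal_ne_top (min_le_right _ _ |>.trans_lt one_lt_top).ne
  refine ⟨D⁻¹, inv_lt_top.2 (pos_iff_ne_zero.2 hD0), fun lam hlam k => ?_⟩
  set v := sSup ((fun x => mw w x z) '' 𝒰.U k)
  have hmw_le : ∀ x ∈ 𝒰.U k, mw w x z ≤ v := fun x hx =>
    le_csSup (bddAbove_mw_image hw hwpos (𝒰.relCompact k) z) ⟨x, hx, rfl⟩
  obtain ⟨x₀, hx₀⟩ := (𝒰.interiorNonempty k).mono interior_subset
  have hv : 0 < v := (div_pos (hwpos z) (hwpos x₀)).trans_le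
    ((div_le_mw x₀ z).trans (hmw_le x₀ hx₀))
  have hvw : ∀ x ∈ 𝒰.U k, w z ≤ v * w x := fun x hx =>
    (div_le_iff₀ (hwpos x)).1 ((div_le_mw x z).trans (hmw_le x hx))
  rw [mul_assoc, ← ENNReal.mul_le_iff_le_inv hD0 hDtop, mul_comm, ← mul_assoc]
  exact 𝒰.ofReal_mul_le_eLpNorm hwpos hv hvw hp hlam

/-- The sequence space `(L^p_w)^♮(U)` embeds continuously into
`ℓ^∞_{1/r}(I)`, where `r(i) = ṽ(i)·μ(U_i)` and `ṽ(i) = sup_{x∈U_i} v(x)`, `v = m(·,z)`. -/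
theorem Ynatural_embeds_linfty
    {X : Type*} [TopologicalSpace X] [T2Space X] [LocallyCompactSpace X]
    [SigmaCompactSpace X] [MeasurableSpace X] [BorelSpace X]
    (μ : MeasureTheory.Measure X) [μ.Regular] [μ.IsOpenPosMeasure]
    {I : Type*} [Countable I]
    (𝒰 : ModCover X μ I)
    (w : X → ℝ) (hw : Continuous w) (hwpos : ∀ x, 0 < w x)
    (CmU : ℝ) (hcover : ∀ i, ∀ x ∈ 𝒰.U i, ∀ y ∈ 𝒰.U i, mw w x y ≤ CmU)
    (z : X) :
    ∀ p : ℝ≥0∞, 1 ≤ p →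
      ∃ C : ℝ≥0∞, C < ⊤ ∧
        ∀ lam : I → ℝ, (∀ i, 0 ≤ lam i) → ∀ k : I,
          ENNReal.ofReal (lam k) ≤
            C * (ENNReal.ofReal (sSup ((fun x => mw w x z) '' 𝒰.U k)) * μ (𝒰.U k)) *
              MeasureTheory.eLpNorm
                (fun x => (∑' i, lam i * (μ (𝒰.U i)).toReal⁻¹ *
                    (𝒰.U i).indicator (fun _ => (1 : ℝ)) x) * w x) p μ :=
  Ynatural_embeds_linfty_general μ 𝒰 w hw hwpos z
end
end
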